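/- Let X be a complete bounded metric space and {T(a)}_{a ∈ D} a family of maps X → X indexed by a compact set D ⊆ ℝ such that each T(a) is (1-ε)-Lipschitz for fixed 0 < ε ≤ 1, and the map a ↦ T(a) is uniformly continuous in the sense: for every η > 0 there is δ > 0 with sup_{x ∈ X} d(T(a)x, T(b)x) < η whenever |a - b| < δ. Fix x* ∈ X and define, for input sequences u : ℤ^- → D, F(u) = lim_{N→∞} T(u_0)T(u_{-1})⋯T(u_{-N}) x* (which exists). Then F is continuous from (K^-(D), ‖·‖_w) to X for every decreasing null weight sequence w with values in (0,1]. -/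
import Mathlib


open Filter

/-- `chain T x u N = T (u 0) (T (u 1) (⋯ (T (u N) x)))`, the time-ordered
product `T(u_0)T(u_{-1})⋯T(u_{-N}) x` (sequences on `ℤ⁻` indexed by
`j ↦ u_{-j}`). -/
def chain {X : Type*} (T : ℝ → X → X) (x : X) : (ℕ → ℝ) → ℕ → X
  | u, 0 => T (u 0) x
  | u, N + 1 => T (u 0) (chain T x (fun j => u (j + 1)) N)

lemma chain_succ_dist {X : Type*} [MetricSpace X]
    (B : ℝ) (hB : ∀ x y : X, dist x y ≤ B)
    (D : Set ℝ) (T : ℝ → X → X) (ε : ℝ) (hε1 : ε ≤ 1)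
    (hLip : ∀ a ∈ D, ∀ x y : X, dist (T a x) (T a y) ≤ (1 - ε) * dist x y)
    (xstar : X) :
    ∀ N : ℕ, ∀ u : ℕ → ℝ, (∀ j, u j ∈ D) →
      dist (chain T xstar u N) (chain T xstar u (N + 1)) ≤ (1 - ε) * B * (1 - ε) ^ N := by
  intro N
  induction N with
  | zero =>
    intro u hu
    show dist (T (u 0) xstar) (T (u 0) (T (u 1) xstar)) ≤ _
    calc dist (T (u 0) xstar) (T (u 0) (T (u 1) xstar))
        ≤ (1 - ε) * dist xstar (T (u 1) xstar) := hLip _ (hu 0) _ _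
      _ ≤ (1 - ε) * B := by
          have h1 : (0 : ℝ) ≤ 1 - ε := by linarith
          exact mul_le_mul_of_nonneg_left (hB _ _) h1
      _ = (1 - ε) * B * (1 - ε) ^ 0 := by ring
  | succ N ih =>
    intro u hu
    show dist (T (u 0) (chain T xstar (fun j => u (j + 1)) N))
        (T (u 0) (chain T xstar (fun j => u (j + 1)) (N + 1))) ≤ _
    calc dist (T (u 0) (chain T xstar (fun j => u (j + 1)) N))
          (T (u 0) (chain T xstar (fun j => u (j + 1)) (N + 1)))
        ≤ (1 - ε) * dist (chain T xstar (fun j => u (j + 1)) N)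
            (chain T xstar (fun j => u (j + 1)) (N + 1)) := hLip _ (hu 0) _ _
      _ ≤ (1 - ε) * ((1 - ε) * B * (1 - ε) ^ N) := by
          have h1 : (0 : ℝ) ≤ 1 - ε := by linarith
          exact mul_le_mul_of_nonneg_left (ih _ (fun j => hu (j + 1))) h1
      _ = (1 - ε) * B * (1 - ε) ^ (N + 1) := by ring

lemma chain_compare {X : Type*} [MetricSpace X]
    (D : Set ℝ) (T : ℝ → X → X) (ε : ℝ) (hε0 : 0 < ε) (hε1 : ε ≤ 1)
    (hLip : ∀ a ∈ D, ∀ x y : X, dist (T a x) (T a y) ≤ (1 - ε) * dist x y)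
    (xstar : X) (η' δ' : ℝ) (hη' : 0 < η')
    (hδ : ∀ a ∈ D, ∀ b ∈ D, |a - b| < δ' → ∀ x : X, dist (T a x) (T b x) < η') :
    ∀ N : ℕ, ∀ u v : ℕ → ℝ, (∀ j, u j ∈ D) → (∀ j, v j ∈ D) →
      (∀ j ≤ N, |u j - v j| < δ') →
      dist (chain T xstar u N) (chain T xstar v N) ≤ η' / ε := by
  intro N
  induction N with
  | zero =>
    intro u v hu hv hd
    show dist (T (u 0) xstar) (T (v 0) xstar) ≤ _
    have h := (hδ _ (hu 0) _ (hv 0) (hd 0 le_rfl) xstar).le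
    have : η' ≤ η' / ε := by
      rw [le_div_iff₀ hε0]
      nlinarith
    linarith
  | succ N ih =>
    intro u v hu hv hd
    have hA := ih (fun j => u (j + 1)) (fun j => v (j + 1)) (fun j => hu (j + 1))
      (fun j => hv (j + 1)) (fun j hj => hd (j + 1) (by omega))
    show dist (T (u 0) (chain T xstar (fun j => u (j + 1)) N))
        (T (v 0) (chain T xstar (fun j => v (j + 1)) N)) ≤ _
    calc dist (T (u 0) (chain T xstar (fun j => u (j + 1)) N))
          (T (v 0) (chain T xstar (fun j => v (j + 1)) N))
        ≤ dist (T (u 0) (chain T xstar (fun j => u (j + 1)) N))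
            (T (u 0) (chain T xstar (fun j => v (j + 1)) N))
          + dist (T (u 0) (chain T xstar (fun j => v (j + 1)) N))
            (T (v 0) (chain T xstar (fun j => v (j + 1)) N)) := dist_triangle _ _ _
      _ ≤ (1 - ε) * (η' / ε) + η' := by
          have h1 := hLip _ (hu 0) (chain T xstar (fun j => u (j + 1)) N)
            (chain T xstar (fun j => v (j + 1)) N)
          have h2 := (hδ _ (hu 0) _ (hv 0) (hd 0 (by omega))
            (chain T xstar (fun j => v (j + 1)) N)).le
          have h3 : (1 - ε) * dist (chain T xstar (fun j => u (j + 1)) N)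
              (chain T xstar (fun j => v (j + 1)) N) ≤ (1 - ε) * (η' / ε) :=
            mul_le_mul_of_nonneg_left hA (by linarith)
          linarith
      _ = η' / ε := by field_simp; ring

/-- Fading memory property of the induced functional of a convergent,
input-continuous family of contractions. -/
theorem stmt_13 {X : Type*} [MetricSpace X] [CompleteSpace X]
    (B : ℝ) (hB : ∀ x y : X, dist x y ≤ B)
    (D : Set ℝ) (hD : IsCompact D)
    (T : ℝ → X → X) (ε : ℝ) (hε0 : 0 < ε) (hε1 : ε ≤ 1)
    (hLip : ∀ a ∈ D, ∀ x y : X, dist (T a x) (T a y) ≤ (1 - ε) * dist x y)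
    (hUC : ∀ η : ℝ, 0 < η → ∃ δ > 0, ∀ a ∈ D, ∀ b ∈ D,
      |a - b| < δ → ∀ x : X, dist (T a x) (T b x) < η)
    (xstar : X) :
    ∃ F : (ℕ → ℝ) → X,
      (∀ u : ℕ → ℝ, (∀ j, u j ∈ D) →
        Tendsto (fun N => chain T xstar u N) atTop (nhds (F u))) ∧
      (∀ w : ℕ → ℝ, (∀ k, 0 < w k ∧ w k ≤ 1) → (∀ j k : ℕ, j ≤ k → w k ≤ w j) →
        Tendsto w atTop (nhds 0) →
        ∀ u : ℕ → ℝ, (∀ j, u j ∈ D) → ∀ η : ℝ, 0 < η →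
          ∃ δ > 0, ∀ v : ℕ → ℝ, (∀ j, v j ∈ D) →
            (⨆ k : ℕ, |u k - v k| * w k) < δ → dist (F u) (F v) < η) := by
  haveI : Nonempty X := ⟨xstar⟩
  have hr : (1 : ℝ) - ε < 1 := by linarith
  have hgeo : ∀ u : ℕ → ℝ, (∀ j, u j ∈ D) → ∀ n : ℕ,
      dist (chain T xstar u n) (chain T xstar u (n + 1)) ≤ (1 - ε) * B * (1 - ε) ^ n :=
    fun u hu n => chain_succ_dist B hB D T ε hε1 hLip xstar n u hu
  have hconv : ∀ u : ℕ → ℝ, (∀ j, u j ∈ D) →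
      Tendsto (fun N => chain T xstar u N) atTop
        (nhds (limUnder atTop (fun N => chain T xstar u N))) := by
    intro u hu
    exact (cauchySeq_of_le_geometric (1 - ε) ((1 - ε) * B) hr (hgeo u hu)).tendsto_limUnder
  refine ⟨fun u => limUnder atTop (fun N => chain T xstar u N), fun u hu => hconv u hu, ?_⟩
  intro w hw hwmono hw0 u hu η hη
  -- tail bound
  have htail : ∀ u : ℕ → ℝ, (∀ j, u j ∈ D) → ∀ n : ℕ,
      dist (chain T xstar u n) (limUnder atTop (fun N => chain T xstar u N)) ≤
        (1 - ε) * B * (1 - ε) ^ n / (1 - (1 - ε)) := by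
    intro u hu n
    exact dist_le_of_le_geometric_of_tendsto (1 - ε) ((1 - ε) * B) hr (hgeo u hu)
      (hconv u hu) n
  -- choose N
  have hpow : Tendsto (fun n : ℕ => (1 - ε) * B * (1 - ε) ^ n / (1 - (1 - ε)))
      atTop (nhds 0) := by
    have h0 : (0 : ℝ) ≤ 1 - ε := by linarith
    have := tendsto_pow_atTop_nhds_zero_of_lt_one h0 hr
    have := this.const_mul ((1 - ε) * B)
    simpa [mul_zero] using this.div_const (1 - (1 - ε))
  obtain ⟨N, hN⟩ := (hpow.eventually (gt_mem_nhds (by positivity : (0:ℝ) < η / 4))).exists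
  -- choose δ' from hUC
  obtain ⟨δ', hδ'0, hδ'⟩ := hUC (ε * η / 4) (by positivity)
  -- bound on D
  obtain ⟨R, hR⟩ := hD.isBounded.subset_closedBall 0
  refine ⟨δ' * w N, mul_pos hδ'0 (hw N).1, fun v hv hsup => ?_⟩
  -- pointwise closeness up to N
  have hclose : ∀ j ≤ N, |u j - v j| < δ' := by
    intro j hj
    have hbdd : BddAbove (Set.range fun k => |u k - v k| * w k) := by
      refine ⟨2 * R, ?_⟩
      rintro _ ⟨k, rfl⟩
      have h1 : |u k - v k| ≤ 2 * R := by
        have hu' := hR (hu k)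
        have hv' := hR (hv k)
        simp only [Metric.mem_closedBall, Real.dist_eq, sub_zero] at hu' hv'
        have := abs_sub (u k) (v k)
        calc |u k - v k| ≤ |u k| + |v k| := abs_sub _ _
          _ ≤ 2 * R := by linarith
      calc |u k - v k| * w k ≤ |u k - v k| * 1 :=
            mul_le_mul_of_nonneg_left (hw k).2 (abs_nonneg _)
        _ ≤ 2 * R := by linarith
    have h1 : |u j - v j| * w j ≤ ⨆ k : ℕ, |u k - v k| * w k :=
      le_ciSup hbdd j
    have h2 : |u j - v j| * w j < δ' * w N := lt_of_le_of_lt h1 hsup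
    have h3 : δ' * w N ≤ δ' * w j := mul_le_mul_of_nonneg_left (hwmono j N hj) hδ'0.le
    have h4 : |u j - v j| * w j < δ' * w j := lt_of_lt_of_le h2 h3
    exact lt_of_mul_lt_mul_right h4 (hw j).1.le
  have hmid : dist (chain T xstar u N) (chain T xstar v N) ≤ (ε * η / 4) / ε :=
    chain_compare D T ε hε0 hε1 hLip xstar (ε * η / 4) δ' (by positivity) hδ' N u v hu hv hclose
  have hmid' : dist (chain T xstar u N) (chain T xstar v N) ≤ η / 4 := by
    have : (ε * η / 4) / ε = η / 4 := by field_simp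
    linarith [hmid, this.le]
  have ht1 := htail u hu N
  have ht2 := htail v hv N
  calc dist (limUnder atTop (fun N => chain T xstar u N))
        (limUnder atTop (fun N => chain T xstar v N))
      ≤ dist (limUnder atTop (fun N => chain T xstar u N)) (chain T xstar u N)
        + dist (chain T xstar u N) (chain T xstar v N)
        + dist (chain T xstar v N) (limUnder atTop (fun N => chain T xstar v N)) :=
        dist_triangle4 _ _ _ _
    _ < η := by
        rw [dist_comm (limUnder atTop (fun N => chain T xstar u N))]
        linarith [hN, ht1, ht2, hmid']
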